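/- arXiv:2404.19290 — 2 statements merged into one kernel-verified Lean document; each statement's English description precedes it below -/
import Mathlib

section
/- Let ρ > 1 and let h be a complex-valued function analytic on an open set containing the closed annulus {z ∈ ℂ : 1/ρ ≤ |z| ≤ ρ}. Define I(h) = (1/2π)∫₀^{2π} h(e^{iθ}) dθ, and for an integer N > 1 define T_N(h) = (1/N)∑_{k=0}^{N−1} h(e^{2πik/N}) and ‖h‖ = (1/2π)∫₀^{2π} |h(ρ^{−1}e^{iθ})| dθ + (1/2π)∫₀^{2π} |h(ρe^{iθ})| dθ. Then |T_N(h) − I(h)| ≤ (ρ^{−N}/(1 − ρ^{−N})) · ‖h‖. -/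
/-! The Fourier coefficients `a m` of `θ ↦ h (exp (θ I))` are the Laurent coefficients of `h`, so
moving the contour to the circle of radius `r ∈ [ρ⁻¹, ρ]` gives `‖a m‖ ≤ r ^ (-m) * M r`, where
`M r` is the mean of `‖h‖` over that circle. The coefficients are therefore absolutely summable and
the Fourier series converges pointwise; averaging it over the `N`-th roots of unity kills every
frequency not divisible by `N`, so `T_N(h) = ∑ j, a (j * N)` and
`T_N(h) - I(h) = ∑ j ≠ 0, a (j * N)`. Bounding the terms with `r = ρ` for `j > 0` and `r = ρ⁻¹`
for `j < 0` leaves two geometric series of ratio `ρ ^ (-N)`. -/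

open MeasureTheory intervalIntegral Complex Finset Metric Real

theorem sum_range_exp_two_pi_I_mul_div {N : ℕ} (hN : N ≠ 0) (m : ℤ) :
    ∑ k ∈ range N, exp (2 * π * I * m * k / N) = if (N : ℤ) ∣ m then (N : ℂ) else 0 := by
  set ζ := exp (2 * π * I / N)
  have hζ : IsPrimitiveRoot ζ N := isPrimitiveRoot_exp N hN
  have hpow (k : ℕ) : exp (2 * π * I * m * k / N) = (ζ ^ m) ^ k := by
    rw [← zpow_natCast, ← zpow_mul, ← exp_int_mul]
    congr 1
    push_cast
    ring
  simp_rw [hpow]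
  split_ifs with hdvd
  · simp [(hζ.zpow_eq_one_iff_dvd m).mpr hdvd]
  · have hne := mt (hζ.zpow_eq_one_iff_dvd m).mp hdvd
    rw [geom_sum_eq hne, ← zpow_natCast, ← zpow_mul, mul_comm m, zpow_mul, zpow_natCast,
      hζ.pow_eq_one, one_zpow, sub_self, zero_div]

theorem hasSum_fourierCoeff_mul_natCast {T : ℝ} [Fact (0 < T)] (f : C(AddCircle T, ℂ))
    (hf : Summable (fourierCoeff f)) {N : ℕ} (hN : N ≠ 0) :
    HasSum (fun j : ℤ => fourierCoeff f (j * N))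
      ((N : ℂ)⁻¹ * ∑ k ∈ range N, f ↑(k * T / N)) := by
  have hT : (T : ℂ) ≠ 0 := ofReal_ne_zero.mpr (Fact.out : 0 < T).ne'
  have hN' : (N : ℂ) ≠ 0 := Nat.cast_ne_zero.mpr hN
  have hroots (m : ℤ) : (N : ℂ)⁻¹ * ∑ k ∈ range N, fourier m (↑(k * T / N) : AddCircle T) =
      if (N : ℤ) ∣ m then 1 else 0 := by
    have hk (k : ℕ) : fourier m (↑(k * T / N) : AddCircle T) = exp (2 * π * I * m * k / N) := by
      rw [fourier_coe_apply]
      congr 1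
      push_cast
      field_simp
    simp_rw [hk, sum_range_exp_two_pi_I_mul_div hN]
    split_ifs <;> simp [hN']
  have hfilter : HasSum (fun m : ℤ => if (N : ℤ) ∣ m then fourierCoeff f m else 0)
      ((N : ℂ)⁻¹ * ∑ k ∈ range N, f ↑(k * T / N)) := by
    refine ((hasSum_sum fun (k : ℕ) _ => has_pointwise_sum_fourier_series_of_summable hf
      (↑(k * T / N))).mul_left (N : ℂ)⁻¹).congr_fun fun m => ?_
    simp_rw [smul_eq_mul, ← mul_sum, mul_left_comm _ (fourierCoeff f m), hroots, mul_boole]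
  have hinj : Function.Injective (fun j : ℤ => j * N) :=
    mul_left_injective₀ (Int.natCast_ne_zero.mpr hN)
  convert (hinj.hasSum_iff ?_).mpr hfilter using 1
  · ext j
    simp
  · rintro m hm
    rw [if_neg]
    rintro ⟨j, rfl⟩
    exact hm ⟨j, mul_comm _ _⟩

section GeometricDecay

variable {E : Type*} [NormedAddCommGroup E] {a : ℤ → E} {q B₁ B₂ : ℝ}

theorem summable_of_norm_le_geometric [CompleteSpace E] (hq₀ : 0 ≤ q) (hq₁ : q < 1)
    (hpos : ∀ n : ℕ, ‖a n‖ ≤ q ^ n * B₁) (hneg : ∀ n : ℕ, ‖a (-n)‖ ≤ q ^ n * B₂) :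
    Summable a :=
  .of_nat_of_neg (.of_norm_bounded ((summable_geometric_of_lt_one hq₀ hq₁).mul_right B₁) hpos)
    (.of_norm_bounded ((summable_geometric_of_lt_one hq₀ hq₁).mul_right B₂) hneg)

theorem norm_sub_le_of_norm_le_geometric {s : E} (hs : HasSum a s) (hq₀ : 0 ≤ q) (hq₁ : q < 1)
    (hpos : ∀ n : ℕ, ‖a n‖ ≤ q ^ n * B₁) (hneg : ∀ n : ℕ, ‖a (-n)‖ ≤ q ^ n * B₂) :
    ‖s - a 0‖ ≤ q / (1 - q) * (B₂ + B₁) := by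
  have htail : HasSum (fun n : ℕ => a ↑(n + 1) + a (-↑(n + 1))) (s - a 0) := by
    convert (hasSum_nat_add_iff' 1).mpr hs.nat_add_neg using 1
    simp only [range_one, sum_singleton, Nat.cast_zero, neg_zero]
    abel
  have hgeom : HasSum (fun n : ℕ => q ^ (n + 1) * (B₁ + B₂)) (q / (1 - q) * (B₂ + B₁)) := by
    rw [show q / (1 - q) * (B₂ + B₁) = q * (B₁ + B₂) * (1 - q)⁻¹ by ring]
    exact ((hasSum_geometric_of_lt_one hq₀ hq₁).mul_left (q * (B₁ + B₂))).congr_fun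
      fun n => by ring
  refine htail.norm_le_of_bounded hgeom fun n => ?_
  calc ‖a ↑(n + 1) + a (-↑(n + 1))‖ ≤ ‖a ↑(n + 1)‖ + ‖a (-↑(n + 1))‖ := norm_add_le _ _
    _ ≤ q ^ (n + 1) * B₁ + q ^ (n + 1) * B₂ := add_le_add (hpos _) (hneg _)
    _ = q ^ (n + 1) * (B₁ + B₂) := by ring

end GeometricDecay

theorem circleIntegral_zpow_mul_eq {r : ℝ} (hr : r ≠ 0) (h : ℂ → ℂ) (m : ℤ) :
    (∮ z in C(0, r), z ^ (-(m + 1)) * h z) =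
      I * ∫ θ in 0..2 * π, circleMap 0 r θ ^ (-m) * h (circleMap 0 r θ) := by
  rw [circleIntegral, ← intervalIntegral.integral_const_mul]
  refine integral_congr fun θ _ => ?_
  have hz : circleMap 0 r θ ≠ 0 := circleMap_ne_center hr
  rw [deriv_circleMap, smul_eq_mul, neg_add, zpow_add₀ hz, zpow_neg_one]
  field_simp

theorem circleIntegral_zpow_mul_eq_of_differentiableOn_annulus {h : ℂ → ℂ} {r R : ℝ}
    (hr : 0 < r) (hrR : r ≤ R) (hh : DifferentiableOn ℂ h (closedBall 0 R \ ball 0 r)) (n : ℤ) :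
    (∮ z in C(0, r), z ^ n * h z) = ∮ z in C(0, R), z ^ n * h z := by
  have hF : DifferentiableOn ℂ (fun z => z ^ n * h z) (closedBall 0 R \ ball 0 r) := by
    refine DifferentiableOn.mul (fun z hz => ?_) hh
    refine (differentiableAt_zpow.mpr (Or.inl ?_)).differentiableWithinAt
    rintro rfl
    exact hz.2 (mem_ball_self hr)
  refine (circleIntegral_eq_of_differentiable_on_annulus_off_countable hr hrR
    Set.countable_empty hF.continuousOn fun z hz => hF.differentiableAt ?_).symm
  exact Filter.mem_of_superset ((isOpen_ball.sdiff isClosed_closedBall).mem_nhds hz.1)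
    (Set.sdiff_subset_sdiff ball_subset_closedBall ball_subset_closedBall)

theorem norm_two_pi_I_inv_mul_circleIntegral_zpow_mul_le {r : ℝ} (hr : 0 < r) (h : ℂ → ℂ)
    (m : ℤ) : ‖(2 * π * I)⁻¹ * ∮ z in C(0, r), z ^ (-(m + 1)) * h z‖ ≤
      r ^ (-m) * circleAverage (‖h ·‖) 0 r := by
  have hnorm (θ : ℝ) : ‖circleMap 0 r θ ^ (-m) * h (circleMap 0 r θ)‖ =
      r ^ (-m) * ‖h (circleMap 0 r θ)‖ := by
    rw [norm_mul, norm_zpow, norm_circleMap_zero, abs_of_pos hr]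
  rw [circleIntegral_zpow_mul_eq hr.ne', ← mul_assoc, norm_mul, circleAverage_def, smul_eq_mul,
    mul_left_comm]
  have h2πI : ‖(2 * π * I)⁻¹ * I‖ = (2 * π)⁻¹ := by
    rw [norm_mul, norm_inv, norm_mul, norm_I]
    simp [abs_of_pos pi_pos]
  rw [h2πI, ← intervalIntegral.integral_const_mul]
  exact mul_le_mul_of_nonneg_left ((intervalIntegral.norm_integral_le_integral_norm
    two_pi_pos.le).trans_eq (integral_congr fun θ _ => hnorm θ)) (by positivity)

theorem toCircle_coe_eq_circleMap (θ : ℝ) :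
    (AddCircle.toCircle (θ : AddCircle (2 * π)) : ℂ) = circleMap 0 1 θ := by
  rw [AddCircle.toCircle_apply_mk, Circle.coe_exp, circleMap_zero]
  field_simp
  simp

local instance : Fact (0 < 2 * π) := ⟨two_pi_pos⟩

theorem fourierCoeff_comp_toCircle (h : ℂ → ℂ) (m : ℤ) :
    fourierCoeff (fun x : AddCircle (2 * π) => h (AddCircle.toCircle x)) m =
      (2 * π * I)⁻¹ * ∮ z in C(0, 1), z ^ (-(m + 1)) * h z := by
  rw [fourierCoeff_eq_intervalIntegral _ m 0, zero_add, circleIntegral_zpow_mul_eq one_ne_zero,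
    ← mul_assoc, real_smul]
  congr 1
  · push_cast
    field_simp
  · refine integral_congr fun θ _ => ?_
    rw [fourier_apply, AddCircle.toCircle_zsmul, smul_eq_mul, Circle.coe_zpow,
      toCircle_coe_eq_circleMap]

theorem norm_fourierCoeff_comp_toCircle_le {h : ℂ → ℂ} {r₁ r₂ r : ℝ} (hr₁ : 0 < r₁)
    (h₁ : r₁ ≤ 1) (h₂ : 1 ≤ r₂) (hh : DifferentiableOn ℂ h (closedBall 0 r₂ \ ball 0 r₁))
    (hr : r ∈ Set.Icc r₁ r₂) (m : ℤ) :
    ‖fourierCoeff (fun x : AddCircle (2 * π) => h (AddCircle.toCircle x)) m‖ ≤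
      r ^ (-m) * circleAverage (‖h ·‖) 0 r := by
  have hr₀ : 0 < r := hr₁.trans_le hr.1
  have hmono (s : ℝ) (hs : r₁ ≤ s) : DifferentiableOn ℂ h (closedBall 0 r₂ \ ball 0 s) :=
    hh.mono (Set.sdiff_subset_sdiff le_rfl (ball_subset_ball hs))
  rw [fourierCoeff_comp_toCircle,
    circleIntegral_zpow_mul_eq_of_differentiableOn_annulus one_pos h₂ (hmono 1 h₁),
    ← circleIntegral_zpow_mul_eq_of_differentiableOn_annulus hr₀ hr.2 (hmono r hr.1)]
  exact norm_two_pi_I_inv_mul_circleIntegral_zpow_mul_le hr₀ h m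

theorem norm_trapezoid_sub_fourierCoeff_zero_le {h : ℂ → ℂ} {ρ : ℝ} (hρ : 1 < ρ)
    (hh : DifferentiableOn ℂ h (closedBall 0 ρ \ ball 0 ρ⁻¹)) {N : ℕ} (hN : N ≠ 0) :
    ‖(N : ℂ)⁻¹ * ∑ k ∈ range N, h (exp (2 * π * I * k / N)) -
        fourierCoeff (fun x : AddCircle (2 * π) => h (AddCircle.toCircle x)) 0‖ ≤
      ρ ^ (-(N : ℤ)) / (1 - ρ ^ (-(N : ℤ))) *
        (circleAverage (‖h ·‖) 0 ρ⁻¹ + circleAverage (‖h ·‖) 0 ρ) := by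
  have hρ_inv_le : ρ⁻¹ ≤ 1 := inv_le_one_of_one_le₀ hρ.le
  have hρ_inv : ρ⁻¹ ≤ ρ := hρ_inv_le.trans hρ.le
  have hcoeff {r : ℝ} (hr : r ∈ Set.Icc ρ⁻¹ ρ) (m : ℤ) :=
    norm_fourierCoeff_comp_toCircle_le (by positivity) hρ_inv_le hρ.le hh hr m
  let g : C(AddCircle (2 * π), ℂ) := ⟨fun x => h (AddCircle.toCircle x),
    hh.continuousOn.comp_continuous (by fun_prop) fun x => by
      simp [Circle.norm_coe, hρ_inv_le, hρ.le]⟩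
  have hpos (K n : ℕ) : ‖fourierCoeff g (n * K)‖ ≤
      (ρ ^ (-(K : ℤ))) ^ n * circleAverage (‖h ·‖) 0 ρ := by
    refine (hcoeff ⟨hρ_inv, le_rfl⟩ _).trans_eq ?_
    rw [← zpow_natCast, ← zpow_mul]
    ring_nf
  have hneg (K n : ℕ) : ‖fourierCoeff g (-n * K)‖ ≤
      (ρ ^ (-(K : ℤ))) ^ n * circleAverage (‖h ·‖) 0 ρ⁻¹ := by
    refine (hcoeff ⟨le_rfl, hρ_inv⟩ _).trans_eq ?_
    rw [← zpow_natCast, ← zpow_mul, inv_zpow', neg_neg]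
    ring_nf
  have hq₀ (K : ℕ) : 0 ≤ ρ ^ (-(K : ℤ)) := by positivity
  have hq₁ {K : ℕ} (hK : K ≠ 0) : ρ ^ (-(K : ℤ)) < 1 := zpow_lt_one_of_neg₀ hρ (by omega)
  have hsum : Summable (fourierCoeff g) :=
    summable_of_norm_le_geometric (hq₀ 1) (hq₁ one_ne_zero) (by simpa using hpos 1)
      (by simpa using hneg 1)
  have hsample (k : ℕ) : g ↑(k * (2 * π) / N) = h (exp (2 * π * I * k / N)) := by
    show h _ = _
    rw [toCircle_coe_eq_circleMap, circleMap_zero]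
    push_cast
    ring_nf
  have key := norm_sub_le_of_norm_le_geometric (hasSum_fourierCoeff_mul_natCast g hsum hN)
    (hq₀ N) (hq₁ hN) (hpos N) (hneg N)
  simp only [hsample, zero_mul] at key
  exact key

theorem stmt_0_general (ρ : ℝ) (hρ : 1 < ρ) (h : ℂ → ℂ) (U : Set ℂ)
    (hUsub : {z : ℂ | ρ⁻¹ ≤ ‖z‖ ∧ ‖z‖ ≤ ρ} ⊆ U)
    (hh : DifferentiableOn ℂ h U) (N : ℕ) (hN : 1 < N) :
    ‖((N : ℂ)⁻¹ * (∑ k ∈ Finset.range N,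
        h (Complex.exp (2 * (Real.pi : ℂ) * Complex.I * (k : ℂ) / (N : ℂ))))
      - ((1 / (2 * Real.pi) : ℝ) : ℂ) *
          ∫ θ in (0 : ℝ)..(2 * Real.pi), h (Complex.exp ((θ : ℂ) * Complex.I)))‖
    ≤ (ρ ^ (-(N : ℤ)) / (1 - ρ ^ (-(N : ℤ)))) *
      ((1 / (2 * Real.pi)) * (∫ θ in (0 : ℝ)..(2 * Real.pi),
          ‖(h (((ρ⁻¹ : ℝ) : ℂ) * Complex.exp ((θ : ℂ) * Complex.I)))‖)
       + (1 / (2 * Real.pi)) * (∫ θ in (0 : ℝ)..(2 * Real.pi),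
          ‖(h (((ρ : ℝ) : ℂ) * Complex.exp ((θ : ℂ) * Complex.I)))‖)) := by
  have hA : DifferentiableOn ℂ h (closedBall 0 ρ \ ball 0 ρ⁻¹) :=
    hh.mono fun z ⟨hzρ, hzρ'⟩ => hUsub ⟨by simpa using hzρ', by simpa using hzρ⟩
  have hmean : fourierCoeff (fun x : AddCircle (2 * π) => h (AddCircle.toCircle x)) 0 =
      ((1 / (2 * π) : ℝ) : ℂ) * ∫ θ in (0 : ℝ)..(2 * π), h (exp (θ * I)) := by
    rw [fourierCoeff_eq_intervalIntegral _ 0 0, zero_add, real_smul]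
    simp [toCircle_coe_eq_circleMap, circleMap_zero]
  have haverage (r : ℝ) : circleAverage (‖h ·‖) 0 r =
      1 / (2 * π) * ∫ θ in (0 : ℝ)..(2 * π), ‖h (r * exp (θ * I))‖ := by
    simp only [circleAverage_def, circleMap_zero, smul_eq_mul, one_div]
  simpa only [hmean, haverage] using norm_trapezoid_sub_fourierCoeff_zero_le hρ hA (by omega)

/-- error bound for the trapezoid rule approximation of the inverse
`Z`-transform coefficient `I(h)` of a function `h` analytic on an open set containing the
closed annulus `{z : 1/ρ ≤ |z| ≤ ρ}`. -/
theorem stmt_0 (ρ : ℝ) (hρ : 1 < ρ) (h : ℂ → ℂ) (U : Set ℂ) (hU : IsOpen U)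
    (hUsub : {z : ℂ | ρ⁻¹ ≤ ‖z‖ ∧ ‖z‖ ≤ ρ} ⊆ U)
    (hh : DifferentiableOn ℂ h U) (N : ℕ) (hN : 1 < N) :
    ‖((N : ℂ)⁻¹ * (∑ k ∈ Finset.range N,
        h (Complex.exp (2 * (Real.pi : ℂ) * Complex.I * (k : ℂ) / (N : ℂ))))
      - ((1 / (2 * Real.pi) : ℝ) : ℂ) *
          ∫ θ in (0 : ℝ)..(2 * Real.pi), h (Complex.exp ((θ : ℂ) * Complex.I)))‖
    ≤ (ρ ^ (-(N : ℤ)) / (1 - ρ ^ (-(N : ℤ)))) *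
      ((1 / (2 * Real.pi)) * (∫ θ in (0 : ℝ)..(2 * Real.pi),
          ‖(h (((ρ⁻¹ : ℝ) : ℂ) * Complex.exp ((θ : ℂ) * Complex.I)))‖)
       + (1 / (2 * Real.pi)) * (∫ θ in (0 : ℝ)..(2 * Real.pi),
          ‖(h (((ρ : ℝ) : ℂ) * Complex.exp ((θ : ℂ) * Complex.I)))‖)) :=
  stmt_0_general ρ hρ h U hUsub hh N hN
end

section
/- Let σ > 0, b > 0, and ω ∈ (−π/2, π/2) satisfy b > σ·sin ω and σ − b·sin ω ≥ 0. Then inf_{y∈ℝ} |σ + i·b·sinh(iω + y)| = σ − b·sin ω, and the infimum is attained at y = 0; that is, the distance from the curve L_{σ,b,ω} = {σ + i·b·sinh(iω + y) : y ∈ ℝ} to the origin equals σ − b·sin ω. -/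
/-!
Writing `s = sin ω`, `c = cosh y`, one has `|χ(y)|² = (σ - b s c)² + b² (1 - s²)(c² - 1)`, and
this exceeds `|χ(0)|² = (σ - b s)²` by `(c - 1)(b² (c + 1) - 2 σ b s)`. The first factor is
nonnegative since `c ≥ 1`, and the second is at least `2 b (b - σ s) > 0`.
-/

/-- The sinh-map `χ_{σ,b,ω}(y) = σ + i·b·sinh(iω + y)`. -/
noncomputable def chi (σ b ω : ℝ) (y : ℂ) : ℂ :=
  (σ : ℂ) + Complex.I * (b : ℂ) * Complex.sinh (Complex.I * (ω : ℂ) + y)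

open Real

lemma chi_ofReal (σ b ω y : ℝ) :
    chi σ b ω y = ((σ - b * sin ω * cosh y : ℝ) : ℂ) + ((b * cos ω * sinh y : ℝ) : ℂ) * Complex.I := by
  rw [chi, Complex.sinh_add, mul_comm Complex.I (ω : ℂ), Complex.sinh_mul_I, Complex.cosh_mul_I]
  push_cast
  linear_combination ((b : ℂ) * Complex.sin ω * Complex.cosh y) * Complex.I_sq

lemma norm_chi_ofReal_sq (σ b ω y : ℝ) :
    ‖chi σ b ω y‖ ^ 2 = (σ - b * sin ω * cosh y) ^ 2 + (b * cos ω * sinh y) ^ 2 := by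
  rw [chi_ofReal, ← Complex.normSq_eq_norm_sq, Complex.normSq_add_mul_I]

lemma norm_chi_ofReal_sq_eq_add (σ b ω y : ℝ) :
    ‖chi σ b ω y‖ ^ 2 = (σ - b * sin ω) ^ 2
      + (cosh y - 1) * (b ^ 2 * (cosh y + 1) - 2 * σ * b * sin ω) := by
  rw [norm_chi_ofReal_sq]
  linear_combination (b ^ 2 * sinh y ^ 2) * sin_sq_add_cos_sq ω
    - (b ^ 2 - b ^ 2 * sin ω ^ 2) * cosh_sq y

lemma norm_chi_zero (σ b ω : ℝ) : ‖chi σ b ω 0‖ = |σ - b * sin ω| := by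
  have h := norm_chi_ofReal_sq_eq_add σ b ω 0
  rw [cosh_zero, sub_self, zero_mul, add_zero, Complex.ofReal_zero] at h
  rw [← sq_eq_sq₀ (norm_nonneg _) (abs_nonneg _), sq_abs, h]

lemma abs_sub_le_norm_chi {σ b ω : ℝ} (hb : 0 < b) (h : σ * sin ω < b) (y : ℝ) :
    |σ - b * sin ω| ≤ ‖chi σ b ω y‖ := by
  have hc : 1 ≤ cosh y := one_le_cosh y
  have hfactor : 0 ≤ b ^ 2 * (cosh y + 1) - 2 * σ * b * sin ω := by nlinarith
  rw [← sq_le_sq₀ (abs_nonneg _) (norm_nonneg _), sq_abs, norm_chi_ofReal_sq_eq_add]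
  nlinarith [mul_nonneg (sub_nonneg.2 hc) hfactor]

theorem stmt_5_general (σ b ω : ℝ) (hb : 0 < b)
    (h1 : σ * Real.sin ω < b) (h2 : 0 ≤ σ - b * Real.sin ω) :
    (⨅ y : ℝ, ‖chi σ b ω (y : ℂ)‖) = σ - b * Real.sin ω ∧
    ‖chi σ b ω 0‖ = σ - b * Real.sin ω ∧
    ∀ y : ℝ, σ - b * Real.sin ω ≤ ‖chi σ b ω (y : ℂ)‖ := by
  have hzero : ‖chi σ b ω 0‖ = σ - b * sin ω := by rw [norm_chi_zero, abs_of_nonneg h2]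
  have hlow (y : ℝ) : σ - b * sin ω ≤ ‖chi σ b ω y‖ := by
    simpa only [abs_of_nonneg h2] using abs_sub_le_norm_chi hb h1 y
  have hbdd : BddBelow (Set.range fun y : ℝ => ‖chi σ b ω y‖) := ⟨_, Set.forall_mem_range.2 hlow⟩
  refine ⟨le_antisymm ?_ (le_ciInf hlow), hzero, hlow⟩
  simpa only [Complex.ofReal_zero, hzero] using ciInf_le hbdd 0

/-- if `b > σ sin ω` and `σ − b sin ω ≥ 0`, the distance from the sinh-deformed
curve `L_{σ,b,ω}` to the origin equals `σ − b sin ω`, attained at `y = 0`. -/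
theorem stmt_5 (σ b ω : ℝ) (hσ : 0 < σ) (hb : 0 < b)
    (hω : ω ∈ Set.Ioo (-(Real.pi / 2)) (Real.pi / 2))
    (h1 : σ * Real.sin ω < b) (h2 : 0 ≤ σ - b * Real.sin ω) :
    (⨅ y : ℝ, ‖chi σ b ω (y : ℂ)‖) = σ - b * Real.sin ω ∧
    ‖chi σ b ω 0‖ = σ - b * Real.sin ω ∧
    ∀ y : ℝ, σ - b * Real.sin ω ≤ ‖chi σ b ω (y : ℂ)‖ :=
  stmt_5_general σ b ω hb h1 h2
end
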